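/- arXiv:0904.1187 — 6 statements merged into one kernel-verified Lean document; each statement's English description precedes it below -/
import Mathlib

section
/- Let κ₁, …, κ_{n−1} : I → ℝ be smooth nonvanishing functions and define G₁ = ∫ κ₁ ds, G₂ = 1, G₃ = (κ₁/κ₂)·G₁, and G_i = (1/κ_{i−1})·(κ_{i−2}·G_{i−2} + G_{i−1}′) for 4 ≤ i ≤ n. Then for n ≥ 4, the sum ∑_{i=1}^{n−2} G_i·G_i′ = κ_{n−2}·G_{n−2}·G_{n−1} (a telescoping identity). -/
/-- telescoping identity ∑_{i=1}^{n−2} G_i·G_i′ = κ_{n−2}·G_{n−2}·G_{n−1}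
for the recursively defined functions G_i. -/
theorem stmt1 (n : ℕ) (hn : 4 ≤ n) (I : Set ℝ) (hI : IsOpen I)
    (κ G : ℕ → ℝ → ℝ)
    (hκsmooth : ∀ i, 1 ≤ i → i ≤ n - 1 → ContDiffOn ℝ (⊤ : ℕ∞) (κ i) I)
    (hκne : ∀ i, 1 ≤ i → i ≤ n - 1 → ∀ s ∈ I, κ i s ≠ 0)
    (hGdiff : ∀ i, 1 ≤ i → i ≤ n → DifferentiableOn ℝ (G i) I)
    (hG1 : ∀ s ∈ I, HasDerivAt (G 1) (κ 1 s) s)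
    (hG2 : ∀ s ∈ I, G 2 s = 1)
    (hG3 : ∀ s ∈ I, G 3 s = κ 1 s / κ 2 s * G 1 s)
    (hGrec : ∀ i, 4 ≤ i → i ≤ n → ∀ s ∈ I,
      κ (i - 1) s * G i s = κ (i - 2) s * G (i - 2) s + deriv (G (i - 1)) s) :
    ∀ s ∈ I, ∑ i ∈ Finset.Icc 1 (n - 2), G i s * deriv (G i) s =
      κ (n - 2) s * G (n - 2) s * G (n - 1) s := by
  have key : ∀ m, 2 ≤ m → m ≤ n - 2 → ∀ s ∈ I,
      ∑ i ∈ Finset.Icc 1 m, G i s * deriv (G i) s = κ m s * G m s * G (m + 1) s := by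
    intro m
    induction m with
    | zero => intro h2; exact absurd h2 (by omega)
    | succ m ih =>
      intro h2 hle s hs
      by_cases hm : m = 1
      · subst hm
        have hd2 : deriv (G 2) s = 0 := by
          have heq : G 2 =ᶠ[nhds s] (fun _ => (1:ℝ)) :=
            Filter.eventuallyEq_of_mem (hI.mem_nhds hs) (fun x hx => hG2 x hx)
          rw [heq.deriv_eq]
          simp
        have hd1 : deriv (G 1) s = κ 1 s := (hG1 s hs).deriv
        have hκ2 : κ 2 s ≠ 0 := hκne 2 (by omega) (by omega) s hs
        rw [show Finset.Icc 1 2 = {1, 2} from rfl]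
        rw [Finset.sum_pair (by norm_num)]
        rw [hd1, hd2, hG2 s hs, hG3 s hs]
        field_simp
        ring
      · have h2m : 2 ≤ m := by omega
        have ihm := ih h2m (by omega) s hs
        rw [Finset.sum_Icc_succ_top (by omega : 1 ≤ m + 1), ihm]
        have hrec := hGrec (m + 2) (by omega) (by omega) s hs
        simp only [show m + 2 - 1 = m + 1 from by omega,
          show m + 2 - 2 = m from by omega] at hrec
        have : m + 1 + 1 = m + 2 := by omega
        rw [this]
        linear_combination -(G (m + 1) s) * hrec
  intro s hs
  have h := key (n - 2) (by omega) le_rfl s hs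
  rw [h, show n - 2 + 1 = n - 1 from by omega]
end

section
/- With G_i defined by the recursion G₁ = ∫κ₁ ds, G₂ = 1, G₃ = (κ₁/κ₂)G₁, G_i = (1/κ_{i−1})(κ_{i−2}G_{i−2} + G_{i−1}′), the function ∑_{i=1}^{n} G_i² is constant on I if and only if G_n satisfies the differential equation G_n′ = −κ_{n−1}·G_{n−1} at every point where G_n ≠ 0, and conversely if G_n′ = −κ_{n−1}·G_{n−1} holds on all of I then ∑_{i=1}^{n} G_i² is constant. -/
open Set Filter

/-- A function with zero derivative on an open preconnected set is constant there. -/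
lemma const_of_hasDerivAt_zero {I : Set ℝ} (hI : IsOpen I) (hIconn : IsPreconnected I)
    {f : ℝ → ℝ} (hf : ∀ s ∈ I, HasDerivAt f 0 s) :
    ∃ C : ℝ, ∀ s ∈ I, f s = C := by
  rcases I.eq_empty_or_nonempty with rfl | ⟨s₀, hs₀⟩
  · exact ⟨0, by simp⟩
  -- locally constant
  have hloc : ∀ s ∈ I, ∃ ε > 0, Metric.ball s ε ⊆ I ∧ ∀ t ∈ Metric.ball s ε, f t = f s := by
    intro s hs
    rcases Metric.isOpen_iff.1 hI s hs with ⟨ε, hε, hball⟩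
    refine ⟨ε, hε, hball, fun t ht => ?_⟩
    have hdiff : DifferentiableOn ℝ f (Metric.ball s ε) := fun y hy =>
      ((hf y (hball hy)).differentiableAt).differentiableWithinAt
    have hzero : ∀ y ∈ Metric.ball s ε, fderivWithin ℝ f (Metric.ball s ε) y = 0 := by
      intro y hy
      rw [fderivWithin_of_isOpen Metric.isOpen_ball hy]
      have := (hf y (hball hy)).hasFDerivAt.fderiv
      rw [this]; apply ContinuousLinearMap.ext; intro z; simp
    exact (convex_ball s ε).is_const_of_fderivWithin_eq_zero hdiff hzero ht
      (Metric.mem_ball_self hε)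
  refine ⟨f s₀, ?_⟩
  haveI : PreconnectedSpace I := Subtype.preconnectedSpace hIconn
  have hcont : Continuous fun x : I => f x.val :=
    continuousOn_iff_continuous_restrict.1
      (fun y hy => ((hf y hy).differentiableAt).continuousAt.continuousWithinAt)
  set A : Set I := {x : I | f x.val = f s₀} with hA
  have hAclosed : IsClosed A := isClosed_eq hcont continuous_const
  have hAopen : IsOpen A := by
    rw [isOpen_iff_mem_nhds]
    intro x hx
    rcases hloc x.val x.property with ⟨ε, hε, hball, hconst⟩
    rw [mem_nhds_subtype]
    refine ⟨Metric.ball x.val ε, Metric.ball_mem_nhds _ hε, fun y hy => ?_⟩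
    simp only [hA, Set.mem_setOf_eq]
    rw [hconst y.val hy]; exact hx
  have : A = Set.univ := by
    rcases isClopen_iff.1 ⟨hAclosed, hAopen⟩ with h | h
    · exact absurd h (Set.nonempty_iff_ne_empty.1 ⟨⟨s₀, hs₀⟩, rfl⟩)
    · exact h
  intro s hs
  have : (⟨s, hs⟩ : I) ∈ A := this ▸ Set.mem_univ _
  exact this

/-- ∑_{i=1}^{n} G_i² is constant on I iff G_n′ = −κ_{n−1}G_{n−1} holds
at every point where G_n ≠ 0; and if G_n′ = −κ_{n−1}G_{n−1} holds on all of I then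
∑_{i=1}^{n} G_i² is constant. -/
theorem stmt2 (n : ℕ) (hn : 4 ≤ n) (I : Set ℝ) (hI : IsOpen I) (hIconn : IsPreconnected I)
    (κ G : ℕ → ℝ → ℝ)
    (hκsmooth : ∀ i, 1 ≤ i → i ≤ n - 1 → ContDiffOn ℝ (⊤ : ℕ∞) (κ i) I)
    (hκne : ∀ i, 1 ≤ i → i ≤ n - 1 → ∀ s ∈ I, κ i s ≠ 0)
    (hGdiff : ∀ i, 1 ≤ i → i ≤ n → DifferentiableOn ℝ (G i) I)
    (hG1 : ∀ s ∈ I, HasDerivAt (G 1) (κ 1 s) s)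
    (hG2 : ∀ s ∈ I, G 2 s = 1)
    (hG3 : ∀ s ∈ I, G 3 s = κ 1 s / κ 2 s * G 1 s)
    (hGrec : ∀ i, 4 ≤ i → i ≤ n → ∀ s ∈ I,
      κ (i - 1) s * G i s = κ (i - 2) s * G (i - 2) s + deriv (G (i - 1)) s) :
    ((∃ C : ℝ, ∀ s ∈ I, ∑ i ∈ Finset.Icc 1 n, (G i s) ^ 2 = C) →
        ∀ s ∈ I, G n s ≠ 0 → deriv (G n) s = -(κ (n - 1) s) * G (n - 1) s) ∧
      ((∀ s ∈ I, deriv (G n) s = -(κ (n - 1) s) * G (n - 1) s) →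
        ∃ C : ℝ, ∀ s ∈ I, ∑ i ∈ Finset.Icc 1 n, (G i s) ^ 2 = C) := by
  have hDA : ∀ i, 1 ≤ i → i ≤ n → ∀ s ∈ I, DifferentiableAt ℝ (G i) s := fun i h1 h2 s hs =>
    (hGdiff i h1 h2 s hs).differentiableAt (hI.mem_nhds hs)
  have hd1 : ∀ s ∈ I, deriv (G 1) s = κ 1 s := fun s hs => (hG1 s hs).deriv
  have hd2 : ∀ s ∈ I, deriv (G 2) s = 0 := by
    intro s hs
    have h : G 2 =ᶠ[nhds s] fun _ => (1 : ℝ) := by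
      filter_upwards [hI.mem_nhds hs] with t ht using hG2 t ht
    rw [h.deriv_eq, deriv_const]
  -- telescoping identity
  have key : ∀ j, 2 ≤ j → j ≤ n - 1 → ∀ s ∈ I,
      ∑ i ∈ Finset.Icc 1 j, G i s * deriv (G i) s = κ j s * G j s * G (j + 1) s := by
    intro j hj2
    induction j, hj2 using Nat.le_induction with
    | base =>
      intro _ s hs
      have h2 : (2 : ℕ) ≤ n - 1 := by omega
      have hκ2 : κ 2 s ≠ 0 := hκne 2 (by omega) h2 s hs
      have : Finset.Icc 1 2 = {1, 2} := by decide
      rw [this, Finset.sum_pair (by norm_num : (1:ℕ) ≠ 2)]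
      rw [hd1 s hs, hd2 s hs, hG2 s hs, hG3 s hs]
      field_simp
      ring
    | succ j hj ih =>
      intro hjn s hs
      have hsum := ih (by omega) s hs
      have hrec := hGrec (j + 2) (by omega) (by omega) s hs
      simp only [Nat.add_sub_cancel] at hrec
      have : j + 2 - 1 = j + 1 := by omega
      rw [this] at hrec
      rw [Finset.sum_Icc_succ_top (by omega : 1 ≤ j + 1), hsum]
      have : deriv (G (j + 1)) s = κ (j + 1) s * G (j + 2) s - κ j s * G j s := by
        linarith [hrec]
      rw [this]
      ring_nf
  -- full sum identity
  have hfull : ∀ s ∈ I, ∑ i ∈ Finset.Icc 1 n, G i s * deriv (G i) s =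
      κ (n - 1) s * G (n - 1) s * G n s + G n s * deriv (G n) s := by
    intro s hs
    have hn1 : n = (n - 1) + 1 := by omega
    rw [hn1, Finset.sum_Icc_succ_top (by omega : 1 ≤ (n - 1) + 1),
      key (n - 1) (by omega) (by omega) s hs, ← hn1]
  -- derivative of the sum of squares
  have hS : ∀ s ∈ I, HasDerivAt (fun t => ∑ i ∈ Finset.Icc 1 n, (G i t) ^ 2)
      (2 * (κ (n - 1) s * G (n - 1) s * G n s + G n s * deriv (G n) s)) s := by
    intro s hs
    have h : HasDerivAt (fun t => ∑ i ∈ Finset.Icc 1 n, (G i t) ^ 2)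
        (∑ i ∈ Finset.Icc 1 n, 2 * G i s * deriv (G i) s) s := by
      apply HasDerivAt.fun_sum
      intro i hi
      rw [Finset.mem_Icc] at hi
      have := ((hDA i hi.1 hi.2 s hs).hasDerivAt).fun_pow 2
      simpa [mul_comm, mul_assoc, mul_left_comm] using this
    have heq : ∑ i ∈ Finset.Icc 1 n, 2 * G i s * deriv (G i) s =
        2 * (κ (n - 1) s * G (n - 1) s * G n s + G n s * deriv (G n) s) := by
      rw [← hfull s hs, Finset.mul_sum]
      congr 1; ext i; ring
    rwa [heq] at h
  constructor
  · rintro ⟨C, hC⟩ s hs hGn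
    have hev : (fun t => ∑ i ∈ Finset.Icc 1 n, (G i t) ^ 2) =ᶠ[nhds s] fun _ => C := by
      filter_upwards [hI.mem_nhds hs] with t ht using hC t ht
    have hder0 : deriv (fun t => ∑ i ∈ Finset.Icc 1 n, (G i t) ^ 2) s = 0 := by
      rw [hev.deriv_eq, deriv_const]
    have := (hS s hs).deriv
    rw [hder0] at this
    have h0 : G n s * (κ (n - 1) s * G (n - 1) s + deriv (G n) s) = 0 := by linarith
    rcases mul_eq_zero.1 h0 with h | h
    · exact absurd h hGn
    · linarith
  · intro h
    apply const_of_hasDerivAt_zero hI hIconn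
    intro s hs
    have := hS s hs
    rw [h s hs] at this
    convert this using 1
    ring
end

section
/- Let α : I → Eⁿ be a unit speed curve with Frenet frame V₁, …, Vₙ and nonvanishing curvatures κ₁, …, κ_{n−1}. If α is a slant helix (i.e., ⟨V₂(s), U⟩ = cos θ is a nonzero constant for some fixed unit vector U), then the function ∑_{i=1}^{n} G_i² equals the constant sec²θ, where G₁ = ∫κ₁ ds (with appropriate constant of integration), G₂ = 1, G₃ = (κ₁/κ₂)G₁, and G_i = (1/κ_{i−1})(κ_{i−2}G_{i−2} + G_{i−1}′) for 4 ≤ i ≤ n. -/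
open scoped RealInnerProductSpace

/-- if α is a slant helix (⟪V₂, U⟫ = cos θ is a nonzero constant for a fixed
unit vector U), then ∑_{i=1}^n G_i² = sec²θ for the recursively defined functions G_i
(with the appropriate constant of integration in G₁ = ∫κ₁ ds). -/
theorem stmt4 (n : ℕ) (hn : 3 ≤ n) (I : Set ℝ) (hI : IsOpen I)
    (V : ℕ → ℝ → EuclideanSpace ℝ (Fin n)) (κ : ℕ → ℝ → ℝ)
    (hκsmooth : ∀ i, 1 ≤ i → i ≤ n - 1 → ContDiffOn ℝ (⊤ : ℕ∞) (κ i) I)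
    (hκne : ∀ i, 1 ≤ i → i ≤ n - 1 → ∀ s ∈ I, κ i s ≠ 0)
    (horth : ∀ s ∈ I, ∀ i ∈ Finset.Icc 1 n, ∀ j ∈ Finset.Icc 1 n,
      ⟪V i s, V j s⟫ = if i = j then (1 : ℝ) else 0)
    (hF1 : ∀ s ∈ I, HasDerivAt (V 1) (κ 1 s • V 2 s) s)
    (hFi : ∀ i, 2 ≤ i → i ≤ n - 1 → ∀ s ∈ I,
      HasDerivAt (V i) (-(κ (i - 1) s) • V (i - 1) s + κ i s • V (i + 1) s) s)
    (hFn : ∀ s ∈ I, HasDerivAt (V n) (-(κ (n - 1) s) • V (n - 1) s) s)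
    (U : EuclideanSpace ℝ (Fin n)) (hU : ‖U‖ = 1) (θ : ℝ) (hθ : Real.cos θ ≠ 0)
    (hslant : ∀ s ∈ I, ⟪V 2 s, U⟫ = Real.cos θ) :
    ∃ G : ℕ → ℝ → ℝ,
      (∀ s ∈ I, HasDerivAt (G 1) (κ 1 s) s) ∧
      (∀ s ∈ I, G 2 s = 1) ∧
      (∀ s ∈ I, G 3 s = κ 1 s / κ 2 s * G 1 s) ∧
      (∀ i, 4 ≤ i → i ≤ n → ∀ s ∈ I,
        κ (i - 1) s * G i s = κ (i - 2) s * G (i - 2) s + deriv (G (i - 1)) s) ∧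
      (∀ s ∈ I, ∑ i ∈ Finset.Icc 1 n, (G i s) ^ 2 = 1 / Real.cos θ ^ 2) := by
  set c := Real.cos θ with hc
  refine ⟨fun i s => ⟪V i s, U⟫ / c, ?_, ?_, ?_, ?_, ?_⟩
  · -- G₁' = κ₁
    intro s hs
    have h := ((hF1 s hs).inner ℝ (hasDerivAt_const s U)).div_const c
    simp only [inner_zero_right, zero_add, real_inner_smul_left, hslant s hs] at h
    rw [mul_div_assoc, div_self hθ, mul_one] at h
    exact h
  · intro s hs
    show ⟪V 2 s, U⟫ / c = 1
    rw [hslant s hs]; field_simp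
  · intro s hs
    have h2n : 2 ≤ n - 1 := by omega
    have hd := (hFi 2 le_rfl h2n s hs).inner ℝ (hasDerivAt_const s U)
    have hconst : HasDerivAt (fun t => ⟪V 2 t, U⟫) 0 s := by
      have heq : (fun t => ⟪V 2 t, U⟫) =ᶠ[nhds s] fun _ => c :=
        Filter.eventuallyEq_iff_exists_mem.2 ⟨I, hI.mem_nhds hs, fun t ht => hslant t ht⟩
      exact (hasDerivAt_const s c).congr_of_eventuallyEq heq
    have huniq := hd.unique hconst
    simp only [inner_zero_right, zero_add, inner_add_left, real_inner_smul_left] at huniq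
    have hκ2 := hκne 2 (by omega) (by omega) s hs
    have h3 : ⟪V 3 s, U⟫ = κ 1 s / κ 2 s * ⟪V 1 s, U⟫ := by
      rw [div_mul_eq_mul_div, eq_div_iff hκ2]
      linear_combination huniq
    show ⟪V 3 s, U⟫ / c = κ 1 s / κ 2 s * (⟪V 1 s, U⟫ / c)
    rw [h3]; ring
  · intro i hi4 hin s hs
    have h2 : 2 ≤ i - 1 := by omega
    have h3 : i - 1 ≤ n - 1 := by omega
    have hd := ((hFi (i-1) h2 h3 s hs).inner ℝ (hasDerivAt_const s U)).div_const c
    have hii : i - 1 - 1 = i - 2 := by omega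
    have hip : i - 1 + 1 = i := by omega
    rw [hii, hip] at hd
    simp only [inner_zero_right, zero_add, inner_add_left, real_inner_smul_left] at hd
    show κ (i-1) s * (⟪V i s, U⟫ / c)
        = κ (i-2) s * (⟪V (i-2) s, U⟫ / c) + deriv (fun t => ⟪V (i-1) t, U⟫ / c) s
    rw [hd.deriv]
    ring
  · intro s hs
    have horth' : Orthonormal ℝ (fun j : Fin n => V (j + 1) s) := by
      rw [orthonormal_iff_ite]
      intro j k
      have hj : (j : ℕ) + 1 ∈ Finset.Icc 1 n := by
        simp only [Finset.mem_Icc]; omega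
      have hk : (k : ℕ) + 1 ∈ Finset.Icc 1 n := by
        simp only [Finset.mem_Icc]; omega
      rw [horth s hs _ hj _ hk]
      simp [Fin.ext_iff]
    have hcard : Fintype.card (Fin n) = Module.finrank ℝ (EuclideanSpace ℝ (Fin n)) := by
      simp
    have hne : Nonempty (Fin n) := ⟨⟨0, by omega⟩⟩
    let b := basisOfOrthonormalOfCardEqFinrank horth' hcard
    have hbcoe : ⇑b = fun j : Fin n => V (j + 1) s :=
      coe_basisOfOrthonormalOfCardEqFinrank horth' hcard
    have horthb : Orthonormal ℝ ⇑b := by rw [hbcoe]; exact horth'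
    let ob := b.toOrthonormalBasis horthb
    have hobcoe : ⇑ob = fun j : Fin n => V (j + 1) s := by
      rw [b.coe_toOrthonormalBasis horthb, hbcoe]
    have hpars := ob.sum_inner_mul_inner U U
    rw [real_inner_self_eq_norm_sq, hU, one_pow] at hpars
    have hsum : ∑ j : Fin n, ⟪V ((j : ℕ) + 1) s, U⟫ ^ 2 = 1 := by
      rw [← hpars]
      refine Finset.sum_congr rfl fun j _ => ?_
      rw [hobcoe]
      rw [real_inner_comm]
      ring
    have hfin : ∑ j : Fin n, ⟪V ((j : ℕ) + 1) s, U⟫ ^ 2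
        = ∑ j ∈ Finset.range n, ⟪V (j + 1) s, U⟫ ^ 2 :=
      Fin.sum_univ_eq_sum_range (fun j => ⟪V (j + 1) s, U⟫ ^ 2) n
    rw [hfin] at hsum
    have hmap : Finset.Icc 1 n
        = Finset.map ⟨fun j => j + 1, add_left_injective 1⟩ (Finset.range n) := by
      ext x
      simp only [Finset.mem_Icc, Finset.mem_map, Finset.mem_range,
        Function.Embedding.coeFn_mk]
      constructor
      · intro h; exact ⟨x - 1, by omega, by omega⟩
      · rintro ⟨j, hj, rfl⟩; omega
    show ∑ i ∈ Finset.Icc 1 n, (⟪V i s, U⟫ / c) ^ 2 = 1 / c ^ 2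
    rw [hmap, Finset.sum_map]
    simp only [Function.Embedding.coeFn_mk, div_pow]
    rw [← Finset.sum_div, hsum]
end

section
/- Let α : I → Eⁿ be a unit speed curve with Frenet frame V₁, …, Vₙ and nonvanishing curvatures κ₁, …, κ_{n−1}. Suppose the functions G₁ = ∫κ₁ ds, G₂ = 1, G₃ = (κ₁/κ₂)G₁, G_i = (1/κ_{i−1})(κ_{i−2}G_{i−2} + G_{i−1}′) for 4 ≤ i ≤ n satisfy ∑_{i=1}^{n} G_i² = C for a constant C > 0, together with G_n′ = −κ_{n−1}G_{n−1}. Then the vector field U(s) = (1/√C)·∑_{i=1}^{n} G_i(s)·V_i(s) is constant (U′ = 0), has unit norm, and satisfies ⟨V₂(s), U⟩ = 1/√C for all s; hence α is a slant helix. -/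
open scoped RealInnerProductSpace

private lemma sum_shift_aux {M : Type*} [AddCommMonoid M] (m : ℕ) (f : ℕ → M) :
    ∑ i ∈ Finset.Icc 1 m, f (i + 1) = ∑ j ∈ Finset.Icc 2 (m + 1), f j := by
  rw [show Finset.Icc 2 (m + 1) = Finset.map (addRightEmbedding 1) (Finset.Icc 1 m) by
    rw [Finset.map_add_right_Icc], Finset.sum_map]
  rfl

/-- if the recursively defined G_i satisfy ∑ G_i² = C > 0 and
G_n′ = −κ_{n−1}G_{n−1}, then U(s) = (1/√C)·∑ G_i(s)·V_i(s) is a constant unit vector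
field with ⟪V₂(s), U(s)⟫ = 1/√C; hence α is a slant helix. -/
theorem stmt5 (n : ℕ) (hn : 3 ≤ n) (I : Set ℝ) (hI : IsOpen I)
    (V : ℕ → ℝ → EuclideanSpace ℝ (Fin n)) (κ G : ℕ → ℝ → ℝ)
    (hκsmooth : ∀ i, 1 ≤ i → i ≤ n - 1 → ContDiffOn ℝ (⊤ : ℕ∞) (κ i) I)
    (hκne : ∀ i, 1 ≤ i → i ≤ n - 1 → ∀ s ∈ I, κ i s ≠ 0)
    (horth : ∀ s ∈ I, ∀ i ∈ Finset.Icc 1 n, ∀ j ∈ Finset.Icc 1 n,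
      ⟪V i s, V j s⟫ = if i = j then (1 : ℝ) else 0)
    (hF1 : ∀ s ∈ I, HasDerivAt (V 1) (κ 1 s • V 2 s) s)
    (hFi : ∀ i, 2 ≤ i → i ≤ n - 1 → ∀ s ∈ I,
      HasDerivAt (V i) (-(κ (i - 1) s) • V (i - 1) s + κ i s • V (i + 1) s) s)
    (hFn : ∀ s ∈ I, HasDerivAt (V n) (-(κ (n - 1) s) • V (n - 1) s) s)
    (hGdiff : ∀ i, 1 ≤ i → i ≤ n → DifferentiableOn ℝ (G i) I)
    (hG1 : ∀ s ∈ I, HasDerivAt (G 1) (κ 1 s) s)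
    (hG2 : ∀ s ∈ I, G 2 s = 1)
    (hG3 : ∀ s ∈ I, G 3 s = κ 1 s / κ 2 s * G 1 s)
    (hGrec : ∀ i, 4 ≤ i → i ≤ n → ∀ s ∈ I,
      κ (i - 1) s * G i s = κ (i - 2) s * G (i - 2) s + deriv (G (i - 1)) s)
    (hGn : ∀ s ∈ I, deriv (G n) s = -(κ (n - 1) s) * G (n - 1) s)
    (C : ℝ) (hC : 0 < C)
    (hsum : ∀ s ∈ I, ∑ i ∈ Finset.Icc 1 n, (G i s) ^ 2 = C) :
    ∀ s ∈ I,
      HasDerivAt (fun t : ℝ =>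
        (1 / Real.sqrt C) • ∑ i ∈ Finset.Icc 1 n, G i t • V i t) 0 s ∧
      ‖(1 / Real.sqrt C) • ∑ i ∈ Finset.Icc 1 n, G i s • V i s‖ = 1 ∧
      ⟪V 2 s, (1 / Real.sqrt C) • ∑ i ∈ Finset.Icc 1 n, G i s • V i s⟫ =
        1 / Real.sqrt C := by
  intro s hs
  have hsC : 0 < Real.sqrt C := Real.sqrt_pos.2 hC
  -- shifted coefficient functions
  set P : ℕ → ℝ := fun i => if i ≤ n - 1 then G i s * κ i s else 0 with hP
  set Q : ℕ → ℝ := fun i => if 2 ≤ i then G i s * κ (i - 1) s else 0 with hQ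
  have hd1 : deriv (G 1) s = κ 1 s := (hG1 s hs).deriv
  have hd2 : deriv (G 2) s = 0 := by
    have h1 : G 2 =ᶠ[nhds s] fun _ => (1 : ℝ) :=
      Filter.eventually_of_mem (hI.mem_nhds hs) hG2
    rw [h1.deriv_eq, deriv_const]
  -- derivative of each summand
  have hderiv_each : ∀ i ∈ Finset.Icc 1 n,
      HasDerivAt (fun t => G i t • V i t)
        (deriv (G i) s • V i s + ((-(Q i)) • V (i - 1) s + P i • V (i + 1) s)) s := by
    intro i hi
    simp only [Finset.mem_Icc] at hi
    have hg : HasDerivAt (G i) (deriv (G i) s) s :=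
      ((hGdiff i hi.1 hi.2).differentiableAt (hI.mem_nhds hs)).hasDerivAt
    rcases eq_or_ne i 1 with rfl | h1
    · have hQ1 : Q 1 = 0 := if_neg (by omega)
      have hP1 : P 1 = G 1 s * κ 1 s := if_pos (by omega)
      have := hg.smul (hF1 s hs)
      refine this.congr_deriv ?_
      rw [hQ1, hP1]
      module
    · rcases eq_or_ne i n with h2 | h2
      · rw [h2] at hg ⊢
        have hQn : Q n = G n s * κ (n - 1) s := if_pos (by omega)
        have hPn : P n = 0 := if_neg (by omega)
        have := hg.smul (hFn s hs)
        refine this.congr_deriv ?_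
        rw [hQn, hPn]
        module
      · have hQi : Q i = G i s * κ (i - 1) s := if_pos (by omega)
        have hPi : P i = G i s * κ i s := if_pos (by omega)
        have := hg.smul (hFi i (by omega) (by omega) s hs)
        refine this.congr_deriv ?_
        rw [hQi, hPi]
        module
  -- reindexing the shifted sums
  have key_up : ∑ i ∈ Finset.Icc 1 n, P i • V (i + 1) s
      = ∑ j ∈ Finset.Icc 1 n, (if 2 ≤ j then P (j - 1) else 0) • V j s := by
    have e1 : ∑ i ∈ Finset.Icc 1 n, P i • V (i + 1) s
        = ∑ i ∈ Finset.Icc 1 (n - 1), P i • V (i + 1) s := by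
      rw [show Finset.Icc 1 n = Finset.Icc 1 ((n - 1) + 1) from by
        rw [Nat.sub_add_cancel (by omega)]]
      rw [Finset.sum_Icc_succ_top (by omega)]
      have hz : P ((n - 1) + 1) = 0 := if_neg (by omega)
      rw [hz, zero_smul, add_zero]
    have e2 : ∑ i ∈ Finset.Icc 1 (n - 1), P i • V (i + 1) s
        = ∑ j ∈ Finset.Icc 2 n, P (j - 1) • V j s := by
      have := sum_shift_aux (n - 1) (fun j => P (j - 1) • V j s)
      simp only [Nat.add_sub_cancel] at this
      rw [show n - 1 + 1 = n by omega] at this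
      exact this
    have e3 : ∑ j ∈ Finset.Icc 1 n, (if 2 ≤ j then P (j - 1) else 0) • V j s
        = ∑ j ∈ Finset.Icc 2 n, P (j - 1) • V j s := by
      rw [Finset.Icc_eq_cons_Ioc (by omega : 1 ≤ n), Finset.sum_cons,
        show Finset.Ioc 1 n = Finset.Icc 2 n from (Finset.Icc_add_one_left_eq_Ioc 1 n).symm,
        if_neg (by omega), zero_smul, zero_add]
      exact Finset.sum_congr rfl fun j hj => by
        rw [if_pos (Finset.mem_Icc.1 hj).1]
    rw [e1, e2, e3]
  have key_down : ∑ i ∈ Finset.Icc 1 n, Q i • V (i - 1) s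
      = ∑ j ∈ Finset.Icc 1 n, (if j ≤ n - 1 then Q (j + 1) else 0) • V j s := by
    have e1 : ∑ i ∈ Finset.Icc 1 n, Q i • V (i - 1) s
        = ∑ i ∈ Finset.Icc 2 n, Q i • V (i - 1) s := by
      rw [Finset.Icc_eq_cons_Ioc (by omega : 1 ≤ n), Finset.sum_cons,
        show Finset.Ioc 1 n = Finset.Icc 2 n from (Finset.Icc_add_one_left_eq_Ioc 1 n).symm]
      have hz : Q 1 = 0 := if_neg (by omega)
      rw [hz, zero_smul, zero_add]
    have e2 : ∑ i ∈ Finset.Icc 2 n, Q i • V (i - 1) s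
        = ∑ j ∈ Finset.Icc 1 (n - 1), Q (j + 1) • V j s := by
      have := sum_shift_aux (n - 1) (fun i => Q i • V (i - 1) s)
      simp only [Nat.add_sub_cancel] at this
      rw [show n - 1 + 1 = n by omega] at this
      exact this.symm
    have e3 : ∑ j ∈ Finset.Icc 1 n, (if j ≤ n - 1 then Q (j + 1) else 0) • V j s
        = ∑ j ∈ Finset.Icc 1 (n - 1), Q (j + 1) • V j s := by
      rw [show Finset.Icc 1 n = Finset.Icc 1 ((n - 1) + 1) from by
        rw [Nat.sub_add_cancel (by omega)]]
      rw [Finset.sum_Icc_succ_top (by omega), if_neg (by omega), zero_smul, add_zero]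
      exact Finset.sum_congr rfl fun j hj => by
        rw [if_pos (Finset.mem_Icc.1 hj).2]
    rw [e1, e2]
    rw [e3]
  -- the total derivative vanishes
  have hmain : ∑ i ∈ Finset.Icc 1 n,
      (deriv (G i) s • V i s + ((-(Q i)) • V (i - 1) s + P i • V (i + 1) s)) = 0 := by
    have step1 : ∑ i ∈ Finset.Icc 1 n,
        (deriv (G i) s • V i s + ((-(Q i)) • V (i - 1) s + P i • V (i + 1) s))
        = (∑ i ∈ Finset.Icc 1 n, deriv (G i) s • V i s)
          + (-(∑ i ∈ Finset.Icc 1 n, Q i • V (i - 1) s)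
             + ∑ i ∈ Finset.Icc 1 n, P i • V (i + 1) s) := by
      rw [Finset.sum_add_distrib, Finset.sum_add_distrib]
      simp only [neg_smul, Finset.sum_neg_distrib]
    rw [step1, key_up, key_down, ← Finset.sum_neg_distrib, ← Finset.sum_add_distrib,
      ← Finset.sum_add_distrib]
    apply Finset.sum_eq_zero
    intro j hj
    simp only [Finset.mem_Icc] at hj
    have hscal : deriv (G j) s + ((if 2 ≤ j then P (j - 1) else 0)
        - (if j ≤ n - 1 then Q (j + 1) else 0)) = 0 := by
      rcases eq_or_ne j 1 with rfl | hj1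
      · rw [if_neg (by omega), if_pos (by omega)]
        have hQ2 : Q 2 = G 2 s * κ 1 s := if_pos (by omega)
        rw [hQ2, hG2 s hs, hd1]
        ring
      · rcases eq_or_ne j 2 with rfl | hj2
        · rw [if_pos (by omega), if_pos (by omega)]
          have hP1 : P 1 = G 1 s * κ 1 s := if_pos (by omega)
          have hQ3 : Q 3 = G 3 s * κ 2 s := if_pos (by omega)
          rw [hP1, hQ3, hG3 s hs, hd2]
          have hκ2 : κ 2 s ≠ 0 := hκne 2 (by omega) (by omega) s hs
          field_simp
          ring
        · rcases eq_or_ne j n with hjn | hjn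
          · rw [hjn]
            rw [if_pos (by omega), if_neg (by omega)]
            have hPn : P (n - 1) = G (n - 1) s * κ (n - 1) s := by
              rw [hP]
              simp only
              rw [if_pos (by omega)]
            rw [hPn, hGn s hs]
            ring
          · rw [if_pos (by omega), if_pos (by omega)]
            have hPj : P (j - 1) = G (j - 1) s * κ (j - 1) s := if_pos (by omega)
            have hQj : Q (j + 1) = G (j + 1) s * κ j s := by
              rw [hQ]
              simp only
              rw [if_pos (by omega), Nat.add_sub_cancel]
            have hrec := hGrec (j + 1) (by omega) (by omega) s hs
            simp only [Nat.add_sub_cancel, show j + 1 - 2 = j - 1 by omega] at hrec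
            rw [hPj, hQj]
            linarith
    have hexpr : deriv (G j) s • V j s
        + (-((if j ≤ n - 1 then Q (j + 1) else 0) • V j s)
           + (if 2 ≤ j then P (j - 1) else 0) • V j s)
        = (deriv (G j) s + ((if 2 ≤ j then P (j - 1) else 0)
            - (if j ≤ n - 1 then Q (j + 1) else 0))) • V j s := by
      module
    rw [hexpr, hscal, zero_smul]
  -- derivative of the sum
  have hD : HasDerivAt (fun t => ∑ i ∈ Finset.Icc 1 n, G i t • V i t)
      (0 : EuclideanSpace ℝ (Fin n)) s := by
    have := HasDerivAt.fun_sum hderiv_each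
    rwa [hmain] at this
  have hU : HasDerivAt (fun t : ℝ =>
      (1 / Real.sqrt C) • ∑ i ∈ Finset.Icc 1 n, G i t • V i t) 0 s := by
    simpa using hD.fun_const_smul (1 / Real.sqrt C)
  -- inner products with the frame
  have hinner : ∀ i ∈ Finset.Icc 1 n,
      ⟪V i s, ∑ j ∈ Finset.Icc 1 n, G j s • V j s⟫ = G i s := by
    intro i hi
    rw [inner_sum]
    rw [Finset.sum_congr rfl fun j hj => by
      rw [real_inner_smul_right, horth s hs i hi j hj]]
    simp [mul_ite, Finset.sum_ite_eq, hi]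
  -- norm
  have hxx : ⟪(∑ i ∈ Finset.Icc 1 n, G i s • V i s : EuclideanSpace ℝ (Fin n)),
      ∑ i ∈ Finset.Icc 1 n, G i s • V i s⟫ = C := by
    rw [sum_inner]
    rw [Finset.sum_congr rfl fun i hi => by
      rw [real_inner_smul_left, hinner i hi]]
    rw [← hsum s hs]
    exact Finset.sum_congr rfl fun i _ => (sq (G i s)).symm
  have hnx : ‖(∑ i ∈ Finset.Icc 1 n, G i s • V i s : EuclideanSpace ℝ (Fin n))‖
      = Real.sqrt C := by
    have h2 : ‖(∑ i ∈ Finset.Icc 1 n, G i s • V i s : EuclideanSpace ℝ (Fin n))‖ ^ 2 = C := by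
      rw [← real_inner_self_eq_norm_sq]
      exact hxx
    rw [← h2, Real.sqrt_sq (norm_nonneg _)]
  have hnorm : ‖(1 / Real.sqrt C) • ∑ i ∈ Finset.Icc 1 n, G i s • V i s‖ = 1 := by
    rw [norm_smul, hnx]
    rw [Real.norm_eq_abs, abs_of_pos (by positivity : (0:ℝ) < 1 / Real.sqrt C)]
    field_simp
  -- inner product with V 2
  have hin2 : ⟪V 2 s, (1 / Real.sqrt C) • ∑ i ∈ Finset.Icc 1 n, G i s • V i s⟫
      = 1 / Real.sqrt C := by
    rw [real_inner_smul_right, hinner 2 (Finset.mem_Icc.2 ⟨by omega, by omega⟩),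
      hG2 s hs, mul_one]
  exact ⟨hU, hnorm, hin2⟩
end

section
/- There is no slant helix in Eⁿ (n ≥ 3) all of whose Frenet curvatures κ₁, …, κ_{n−1} are nonzero constants. Equivalently: if κ₁, …, κ_{n−1} are nonzero constants, then with G₁(s) = κ₁s, G₂ = 1, G₃ = (κ₁/κ₂)G₁, G_i = (1/κ_{i−1})(κ_{i−2}G_{i−2} + G_{i−1}′), the function ∑_{i=1}^{n} G_i(s)² is a nonconstant polynomial in s, so it cannot be constant. -/
/-- there is no W-slant helix: if the curvatures κ₁,…,κ_{n−1} are nonzero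
constants, then with G₁(s) = κ₁s, G₂ = 1, G₃ = (κ₁/κ₂)G₁ and the usual recursion,
the function ∑_{i=1}^{n} G_i² is not constant. -/
theorem stmt8 (n : ℕ) (hn : 3 ≤ n) (κ : ℕ → ℝ) (G : ℕ → ℝ → ℝ)
    (hκne : ∀ i, 1 ≤ i → i ≤ n - 1 → κ i ≠ 0)
    (hGdiff : ∀ i, 1 ≤ i → i ≤ n → Differentiable ℝ (G i))
    (hG1 : ∀ s : ℝ, G 1 s = κ 1 * s)
    (hG2 : ∀ s : ℝ, G 2 s = 1)
    (hG3 : ∀ s : ℝ, G 3 s = κ 1 / κ 2 * G 1 s)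
    (hGrec : ∀ i, 4 ≤ i → i ≤ n → ∀ s : ℝ,
      κ (i - 1) * G i s = κ (i - 2) * G (i - 2) s + deriv (G (i - 1)) s) :
    ¬ ∃ C : ℝ, ∀ s : ℝ, ∑ i ∈ Finset.Icc 1 n, (G i s) ^ 2 = C := by
  rintro ⟨C, hC⟩
  have h1 : (1:ℕ) ∈ Finset.Icc 1 n := by simp; omega
  have hκ1 : κ 1 ≠ 0 := hκne 1 le_rfl (by omega)
  have hκ1' : (0:ℝ) < |κ 1| := abs_pos.mpr hκ1
  set s₀ : ℝ := (Real.sqrt (max C 0) + 1) / |κ 1| with hs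
  have hle : (G 1 s₀)^2 ≤ C := by
    rw [← hC s₀]
    exact Finset.single_le_sum (fun i _ => sq_nonneg (G i s₀)) h1
  have hsq : Real.sqrt (max C 0) ^ 2 = max C 0 :=
    Real.sq_sqrt (le_max_right _ _)
  have hval : (G 1 s₀)^2 = (Real.sqrt (max C 0) + 1)^2 := by
    rw [hG1, hs]
    rw [mul_pow, div_pow, sq_abs]
    field_simp
  have hC' : C ≤ max C 0 := le_max_left _ _
  nlinarith [Real.sqrt_nonneg (max C 0)]
end

section
/- Let κ_{n−2}, κ_{n−1}, G_{n−2} : I → ℝ be continuous with κ_{n−1} nonvanishing, φ an antiderivative of κ_{n−1}, and h = κ_{n−2}G_{n−2}. If G_{n−1}(s) = (A − ∫ h sin φ ds)·sin φ(s) − (B + ∫ h cos φ ds)·cos φ(s) for constants A, B, then defining G_n(s) = (A − ∫ h sin φ ds)·cos φ(s) + (B + ∫ h cos φ ds)·sin φ(s), one has G_{n−1}′ = κ_{n−1}G_n − κ_{n−2}G_{n−2} (equivalently G_n = (1/κ_{n−1})(κ_{n−2}G_{n−2} + G_{n−1}′)) and G_n′ = −κ_{n−1}G_{n−1}. -/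
/-- converse direction of the integral characterization: if
G_{n−1} = (A − ∫h sin φ)sin φ − (B + ∫h cos φ)cos φ with φ′ = κ_{n−1} nonvanishing and
h = κ_{n−2}G_{n−2}, then G_n := (A − ∫h sin φ)cos φ + (B + ∫h cos φ)sin φ satisfies
G_{n−1}′ = κ_{n−1}G_n − κ_{n−2}G_{n−2} and G_n′ = −κ_{n−1}G_{n−1}. -/
theorem stmt11 (I : Set ℝ) (hI : IsOpen I)
    (κn1 κn2 Gn2 φ S T Gn1 : ℝ → ℝ) (A B : ℝ)
    (hκn1cont : ContinuousOn κn1 I) (hκn2cont : ContinuousOn κn2 I)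
    (hGn2cont : ContinuousOn Gn2 I)
    (hκn1ne : ∀ s ∈ I, κn1 s ≠ 0)
    (hφ : ∀ s ∈ I, HasDerivAt φ (κn1 s) s)
    (hS : ∀ s ∈ I, HasDerivAt S (κn2 s * Gn2 s * Real.sin (φ s)) s)
    (hT : ∀ s ∈ I, HasDerivAt T (κn2 s * Gn2 s * Real.cos (φ s)) s)
    (hGn1 : ∀ s ∈ I,
      Gn1 s = (A - S s) * Real.sin (φ s) - (B + T s) * Real.cos (φ s)) :
    ∀ s ∈ I,
      HasDerivAt Gn1
        (κn1 s * ((A - S s) * Real.cos (φ s) + (B + T s) * Real.sin (φ s))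
          - κn2 s * Gn2 s) s ∧
      HasDerivAt (fun t => (A - S t) * Real.cos (φ t) + (B + T t) * Real.sin (φ t))
        (-(κn1 s) * Gn1 s) s := by
  intro s hs
  have hsinφ : HasDerivAt (fun t => Real.sin (φ t)) (Real.cos (φ s) * κn1 s) s :=
    (Real.hasDerivAt_sin (φ s)).comp s (hφ s hs)
  have hcosφ : HasDerivAt (fun t => Real.cos (φ t)) (-Real.sin (φ s) * κn1 s) s :=
    (Real.hasDerivAt_cos (φ s)).comp s (hφ s hs)
  have h1 : HasDerivAt (fun t => (A - S t) * Real.sin (φ t) - (B + T t) * Real.cos (φ t))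
      (κn1 s * ((A - S s) * Real.cos (φ s) + (B + T s) * Real.sin (φ s))
        - κn2 s * Gn2 s) s := by
    have := (((hasDerivAt_const s A).sub (hS s hs)).mul hsinφ).sub
      (((hasDerivAt_const s B).add (hT s hs)).mul hcosφ)
    refine this.congr_deriv ?_
    simp only [Pi.sub_apply, Pi.add_apply]
    symm
    linear_combination (κn2 s * Gn2 s) * Real.sin_sq_add_cos_sq (φ s)
  have h2 : HasDerivAt (fun t => (A - S t) * Real.cos (φ t) + (B + T t) * Real.sin (φ t))
      (-(κn1 s) * Gn1 s) s := by
    have := (((hasDerivAt_const s A).sub (hS s hs)).mul hcosφ).add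
      (((hasDerivAt_const s B).add (hT s hs)).mul hsinφ)
    refine this.congr_deriv ?_
    simp only [Pi.sub_apply, Pi.add_apply]
    symm
    rw [hGn1 s hs]
    ring
  refine ⟨?_, h2⟩
  exact h1.congr_of_eventuallyEq ((hI.eventually_mem hs).mono fun t ht => hGn1 t ht)
end
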